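/- There exists a finite fundamental lattice in which the laws (Nu) and (Vi) are valid but (Cl) fails. Concretely, the 7-element lattice with bottom 0, top 1, a coatom a below 1, four pairwise-incomparable atoms b, c, d, e below a, and negation given by ¬0 = 1, ¬1 = 0, ¬a = 0, ¬b = c, ¬c = b, ¬d = e, ¬e = d, is a fundamental lattice satisfying (Nu) and (Vi) but with ¬((b∧c) ∨ (b∧d)) ∧ 1 = 1 ≰ a = (b ∧ (c∨d)) ∨ ¬(b ∧ (c∨d)). -/

import Mathlib

/-- A *fundamental negation* on a bounded lattice: antitone, semi-complementation,
double-negation introduction. A bounded lattice with such a negation is a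
*fundamental lattice*. -/
class FNeg (L : Type*) [Lattice L] [BoundedOrder L] where
  neg : L → L
  neg_antitone : ∀ a b : L, a ≤ b → neg b ≤ neg a
  inf_neg : ∀ a : L, a ⊓ neg a = ⊥
  le_neg_neg : ∀ a : L, a ≤ neg (neg a)

open FNeg

/-- The axiom (Ex). -/
def ExAx (L : Type*) [Lattice L] [BoundedOrder L] [FNeg L] : Prop :=
  ∀ a b c d e f : L,
    neg (a ⊓ ((b ⊓ c) ⊔ (b ⊓ d))) ⊓ a ⊓ (c ⊔ e) ⊓ neg (neg f) ≤
      neg (neg (a ⊓ f)) ⊓ ((a ⊓ c) ⊔ (a ⊓ e) ⊔ f) ⊓ ((b ⊓ (c ⊔ d)) ⊔ neg (b ⊓ (c ⊔ d)))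

/-- The axiom (Nu). -/
def NuAx (L : Type*) [Lattice L] [BoundedOrder L] [FNeg L] : Prop :=
  ∀ p q : L, neg (neg p) ⊓ neg (neg q) ≤ neg (neg (p ⊓ q))

/-- The axiom (Vi). -/
def ViAx (L : Type*) [Lattice L] [BoundedOrder L] [FNeg L] : Prop :=
  ∀ a c e f : L, a ⊓ (c ⊔ e) ⊓ neg (neg f) ≤ (a ⊓ c) ⊔ (a ⊓ e) ⊔ f

/-- The axiom (Cl). -/
def ClAx (L : Type*) [Lattice L] [BoundedOrder L] [FNeg L] : Prop :=
  ∀ a b c d : L, neg (a ⊓ ((b ⊓ c) ⊔ (b ⊓ d))) ⊓ a ≤ (b ⊓ (c ⊔ d)) ⊔ neg (b ⊓ (c ⊔ d))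

/-- The 7-element lattice: bottom `z`, top `o`, coatom `a`, and four atoms `b,c,d,e` below `a`. -/
inductive L7 : Type
  | z | b | c | d | e | a | o
deriving DecidableEq

instance : Fintype L7 :=
  ⟨{L7.z, L7.b, L7.c, L7.d, L7.e, L7.a, L7.o}, fun x => by cases x <;> decide⟩

namespace L7

def ble : L7 → L7 → Bool
  | z, _ => true
  | _, o => true
  | b, a | c, a | d, a | e, a => true
  | x, y => x == y

instance : LE L7 := ⟨fun x y => ble x y = true⟩

instance : DecidableRel (fun x y : L7 => x ≤ y) :=
  fun x y => inferInstanceAs (Decidable (ble x y = true))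

def bsup (x y : L7) : L7 := if ble x y then y else if ble y x then x else a
def binf (x y : L7) : L7 := if ble x y then x else if ble y x then y else z

instance : Lattice L7 where
  le := (· ≤ ·)
  le_refl := by decide
  le_trans := by decide
  le_antisymm := by decide
  sup := bsup
  le_sup_left := by decide
  le_sup_right := by decide
  sup_le := by decide
  inf := binf
  inf_le_left := by decide
  inf_le_right := by decide
  le_inf := by decide

instance : BoundedOrder L7 where
  top := o
  le_top := by decide
  bot := z
  bot_le := by decide

def bneg : L7 → L7
  | z => o | o => z | a => z | b => c | c => b | d => e | e => d

instance : FNeg L7 where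
  neg := bneg
  neg_antitone := by decide
  inf_neg := by decide
  le_neg_neg := by decide

end L7

/-! In the seven-element lattice, double negation fixes every element except the coatom `a`, which
it sends to `1`, and every element other than `1` lies below `a`. These two facts alone give (Nu)
and (Vi) in any fundamental lattice with such an element `m` in place of `a`. (Cl) fails at
`(1, b, c, d)`: there `b ∧ c = b ∧ d = 0`, so the left side is `¬0 = 1`, while `b ∧ (c ∨ d) = b`
and `b ∨ ¬b = b ∨ c = a`. -/

section CoatomAbove

variable {L : Type*} [Lattice L] [BoundedOrder L] [FNeg L] {m : L}

theorem neg_neg_inf_le_neg_neg_inf_of_forall_le (hle : ∀ x, x ≠ ⊤ → x ≤ m) (q : L) :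
    neg (neg m) ⊓ neg (neg q) ≤ neg (neg (m ⊓ q)) := by
  by_cases hq : q = ⊤
  · subst hq
    rw [inf_top_eq]
    exact inf_le_left
  · rw [inf_eq_right.2 (hle q hq)]
    exact inf_le_right

theorem nuAx_of_forall_le (hle : ∀ x, x ≠ ⊤ → x ≤ m)
    (hneg : ∀ x, x ≠ m → neg (neg x) = x) : NuAx L := by
  intro p q
  by_cases hp : p = m
  · subst hp
    exact neg_neg_inf_le_neg_neg_inf_of_forall_le hle q
  by_cases hq : q = m
  · subst hq
    rw [inf_comm, inf_comm p]
    exact neg_neg_inf_le_neg_neg_inf_of_forall_le hle p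
  rw [hneg p hp, hneg q hq]
  exact le_neg_neg _

theorem viAx_of_forall_le (hle : ∀ x, x ≠ ⊤ → x ≤ m)
    (hneg : ∀ x, x ≠ m → neg (neg x) = x) : ViAx L := by
  intro x y w f
  by_cases hf : f = m
  · subst hf
    by_cases htop : x ⊓ (y ⊔ w) = ⊤
    · obtain rfl : x = ⊤ := (inf_eq_top_iff.1 htop).1
      simp only [top_inf_eq]
      exact inf_le_left.trans le_sup_left
    · calc x ⊓ (y ⊔ w) ⊓ neg (neg f) ≤ x ⊓ (y ⊔ w) := inf_le_left
        _ ≤ f := hle _ htop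
        _ ≤ _ := le_sup_right
  · rw [hneg f hf]
    exact inf_le_right.trans le_sup_right

end CoatomAbove

namespace L7

theorem le_a_of_ne_top : ∀ x : L7, x ≠ ⊤ → x ≤ a := by decide

theorem neg_neg_of_ne_a : ∀ x : L7, x ≠ a → neg (neg x) = x := by decide

theorem not_clAx : ¬ ClAx L7 := fun h => absurd (h ⊤ b c d) (by decide)

end L7

open L7 in
theorem nu_vi_not_cl :
    NuAx L7 ∧ ViAx L7 ∧ ¬ ClAx L7 ∧
    neg ((b ⊓ c) ⊔ (b ⊓ d)) ⊓ (⊤ : L7) = ⊤ ∧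
    (b ⊓ (c ⊔ d)) ⊔ neg (b ⊓ (c ⊔ d)) = a ∧
    ¬ ((⊤ : L7) ≤ a) :=
  ⟨nuAx_of_forall_le le_a_of_ne_top neg_neg_of_ne_a,
    viAx_of_forall_le le_a_of_ne_top neg_neg_of_ne_a, not_clAx, by decide, by decide, by decide⟩
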